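/- arXiv:1803.10953 — 2 statements merged into one kernel-verified Lean document; each statement's English description precedes it below -/
import Mathlib

section
/- Hennessy–Milner theorem for WAML^n: if M and M' are image-finite n-models, then for all worlds w of M and w' of M', M,w ↔ⁿ M',w' if and only if w and w' satisfy exactly the same WAML formulas. -/
namespace WAML

/-- The language of WAML: atoms, negation, conjunction, and the (diagonal) box. -/
inductive Formula : Type
  | atom : ℕ → Formula
  | neg : Formula → Formula
  | and : Formula → Formula → Formula
  | box : Formula → Formula

namespace Formula

def imp (φ ψ : Formula) : Formula := neg (and φ (neg ψ))
def or (φ ψ : Formula) : Formula := neg (and (neg φ) (neg ψ))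
def dia (φ : Formula) : Formula := neg (box (neg φ))
def bot : Formula := and (atom 0) (neg (atom 0))

/-- The set of propositional letters occurring in a formula. -/
def letters : Formula → Set ℕ
  | atom p => {p}
  | neg φ => letters φ
  | and φ ψ => letters φ ∪ letters ψ
  | box φ => letters φ

end Formula

/-- Conjunction of a list of formulas. -/
def conjList : List Formula → Formula
  | [] => Formula.neg Formula.bot
  | [φ] => φ
  | φ :: ψ :: rest => Formula.and φ (conjList (ψ :: rest))

/-- Disjunction of a list of formulas. -/
def disjList : List Formula → Formula
  | [] => Formula.bot
  | [φ] => φ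
  | φ :: ψ :: rest => Formula.or φ (disjList (ψ :: rest))

/-- ⋁_{0 ≤ i < j ≤ n} (φ_i ∧ φ_j) -/
def pairDisj (n : ℕ) (φ : Fin (n+1) → Formula) : Formula :=
  disjList (((List.finRange (n+1)).product (List.finRange (n+1))).filterMap
    (fun p => if p.1 < p.2 then some (Formula.and (φ p.1) (φ p.2)) else none))

/-- The axiom (scheme) K_n : □φ₀ ∧ ⋯ ∧ □φ_n → □⋁_{0 ≤ i < j ≤ n} (φ_i ∧ φ_j). -/
def KnAxiom (n : ℕ) (φ : Fin (n+1) → Formula) : Formula :=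
  Formula.imp (conjList ((List.finRange (n+1)).map (fun i => Formula.box (φ i))))
    (Formula.box (pairDisj n φ))

/-- A propositional tautology (including all substitution instances): a formula true under
every valuation of formulas respecting ¬ and ∧. -/
def Tautology (φ : Formula) : Prop :=
  ∀ v : Formula → Prop,
    (∀ ψ, v (Formula.neg ψ) ↔ ¬ v ψ) →
    (∀ ψ χ, v (Formula.and ψ χ) ↔ v ψ ∧ v χ) →
    v φ

/-- The proof system 𝕂_n: propositional tautologies, K_n, modus ponens, necessitation, RM. -/
inductive KProof (n : ℕ) : Formula → Prop
  | taut {φ} : Tautology φ → KProof n φ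
  | kn (φ : Fin (n+1) → Formula) : KProof n (KnAxiom n φ)
  | mp {φ ψ} : KProof n (Formula.imp φ ψ) → KProof n φ → KProof n ψ
  | nec {φ} : KProof n φ → KProof n (Formula.box φ)
  | rm {φ ψ} : KProof n (Formula.imp φ ψ) →
      KProof n (Formula.imp (Formula.box φ) (Formula.box ψ))

/-- An n-model: a nonempty set of worlds, an (n+1)-ary relation, a valuation. -/
structure NModel (n : ℕ) where
  World : Type
  nonempty : Nonempty World
  R : World → (Fin n → World) → Prop
  V : World → ℕ → Prop

/-- Diagonal semantics. -/
def Sat {n : ℕ} (M : NModel n) : M.World → Formula → Prop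
  | w, .atom p => M.V w p
  | w, .neg φ => ¬ Sat M w φ
  | w, .and φ ψ => Sat M w φ ∧ Sat M w ψ
  | w, .box φ => ∀ v : Fin n → M.World, M.R w v → ∃ i, Sat M (v i) φ

/-- wa^n-bisimulation between two n-models. -/
def IsBisim {n : ℕ} (M M' : NModel n) (Z : M.World → M'.World → Prop) : Prop :=
  (∃ w w', Z w w') ∧
  (∀ w w', Z w w' → ∀ p, M.V w p ↔ M'.V w' p) ∧
  (∀ w w' (v : Fin n → M.World), Z w w' → M.R w v →
    ∃ v' : Fin n → M'.World, M'.R w' v' ∧ ∀ j, ∃ i, Z (v i) (v' j)) ∧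
  (∀ w w' (v' : Fin n → M'.World), Z w w' → M'.R w' v' →
    ∃ v : Fin n → M.World, M.R w v ∧ ∀ i, ∃ j, Z (v i) (v' j))

/-- wa^n-bisimilarity of pointed n-models. -/
def Bisimilar {n : ℕ} (M M' : NModel n) (w : M.World) (w' : M'.World) : Prop :=
  ∃ Z, IsBisim M M' Z ∧ Z w w'

/-- Image-finiteness: each world has finitely many successor n-tuples. -/
def ImageFinite {n : ℕ} (M : NModel n) : Prop :=
  ∀ w : M.World, {v : Fin n → M.World | M.R w v}.Finite

/-- First-order correspondence language L¹_n: formulas with free variables among Fin k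
(de Bruijn style, `all` binds the last variable). -/
inductive FO (n : ℕ) : ℕ → Type
  | pred {k} : ℕ → Fin k → FO n k
  | rel {k} : (Fin (n+1) → Fin k) → FO n k
  | eq {k} : Fin k → Fin k → FO n k
  | fal {k} : FO n k
  | not {k} : FO n k → FO n k
  | and {k} : FO n k → FO n k → FO n k
  | or {k} : FO n k → FO n k → FO n k
  | imp {k} : FO n k → FO n k → FO n k
  | all {k} : FO n (k+1) → FO n k

/-- Realization of first-order formulas in an n-model (seen as an L¹_n-structure). -/
def FO.Realize {n : ℕ} (M : NModel n) : ∀ {k}, FO n k → (Fin k → M.World) → Prop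
  | _, .pred p x, a => M.V (a x) p
  | _, .rel ts, a => M.R (a (ts 0)) (fun i => a (ts i.succ))
  | _, .eq x y, a => a x = a y
  | _, .fal, _ => False
  | _, .not φ, a => ¬ FO.Realize M φ a
  | _, .and φ ψ, a => FO.Realize M φ a ∧ FO.Realize M ψ a
  | _, .or φ ψ, a => FO.Realize M φ a ∨ FO.Realize M ψ a
  | _, .imp φ ψ, a => FO.Realize M φ a → FO.Realize M ψ a
  | _, .all φ, a => ∀ x, FO.Realize M φ (Fin.snoc a x)

/-- Quantifier rank. -/
def FO.qr {n : ℕ} : ∀ {k}, FO n k → ℕ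
  | _, .pred _ _ => 0
  | _, .rel _ => 0
  | _, .eq _ _ => 0
  | _, .fal => 0
  | _, .not φ => φ.qr
  | _, .and φ ψ => max φ.qr ψ.qr
  | _, .or φ ψ => max φ.qr ψ.qr
  | _, .imp φ ψ => max φ.qr ψ.qr
  | _, .all φ => φ.qr + 1

/-- Renaming of free variables. -/
def FO.rename {n : ℕ} : ∀ {k k'}, (Fin k → Fin k') → FO n k → FO n k'
  | _, _, f, .pred p x => .pred p (f x)
  | _, _, f, .rel ts => .rel (fun i => f (ts i))
  | _, _, f, .eq x y => .eq (f x) (f y)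
  | _, _, _, .fal => .fal
  | _, _, f, .not φ => .not (φ.rename f)
  | _, _, f, .and φ ψ => .and (φ.rename f) (ψ.rename f)
  | _, _, f, .or φ ψ => .or (φ.rename f) (ψ.rename f)
  | _, _, f, .imp φ ψ => .imp (φ.rename f) (ψ.rename f)
  | _, _, f, .all φ =>
      .all (φ.rename (fun j => Fin.lastCases (Fin.last _) (fun a => (f a).castSucc) j))

/-- A block of m universal quantifiers (binding the last m variables). -/
def FO.alls {n k : ℕ} : ∀ (m : ℕ), FO n (k + m) → FO n k
  | 0, φ => φ
  | m+1, φ => FO.alls m φ.all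

/-- Disjunction of a list of first-order formulas. -/
def FO.disjList {n k : ℕ} : List (FO n k) → FO n k
  | [] => .fal
  | [φ] => φ
  | φ :: ψ :: rest => .or φ (FO.disjList (ψ :: rest))

/-- The standard translation ST_x (with x the unique free variable). -/
def ST (n : ℕ) : Formula → FO n 1
  | .atom p => .pred p 0
  | .neg φ => .not (ST n φ)
  | .and φ ψ => .and (ST n φ) (ST n ψ)
  | .box φ =>
      let ψ := ST n φ
      FO.alls n (FO.imp
        (.rel (Fin.cases (Fin.castAdd n (0 : Fin 1)) (fun i => Fin.natAdd 1 i)))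
        (FO.disjList ((List.finRange n).map
          (fun i => ψ.rename (fun _ => Fin.natAdd 1 i)))))

/-- α(x) (one free variable) is invariant under wa^n-bisimulation. -/
def BisimInvariant (n : ℕ) (α : FO n 1) : Prop :=
  ∀ (M N : NModel n) (Z : M.World → N.World → Prop) (w : M.World) (v : N.World),
    IsBisim M N Z → Z w v →
    (FO.Realize M α (fun _ => w) ↔ FO.Realize N α (fun _ => v))

/-- α(x) is invariant under wa^n-bisimulation between finite n-models. -/
def BisimInvariantFin (n : ℕ) (α : FO n 1) : Prop :=
  ∀ (M N : NModel n) (Z : M.World → N.World → Prop) (w : M.World) (v : N.World),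
    Finite M.World → Finite N.World → IsBisim M N Z → Z w v →
    (FO.Realize M α (fun _ => w) ↔ FO.Realize N α (fun _ => v))

/-- Admissible sequences for the unraveling of M around w. The first entry is
((w,…,w), 1) (index 0 in 0-based counting) and consecutive entries are related by R. -/
def GoodSeq {n : ℕ} [NeZero n] (M : NModel n) (w : M.World)
    (s : List ((Fin n → M.World) × Fin n)) : Prop :=
  (∃ rest, s = ((fun _ => w), (0 : Fin n)) :: rest) ∧
  List.Chain' (fun a b => M.R (a.1 a.2) b.1) s

/-- The world of M corresponding to a sequence: v⃗_m[i_m] (and w for the empty list). -/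
def rmap {n : ℕ} (M : NModel n) (w : M.World)
    (s : List ((Fin n → M.World) × Fin n)) : M.World :=
  match s.getLast? with
  | some a => a.1 a.2
  | none => w

/-- The unraveling M_w of M around w. -/
def Unravel {n : ℕ} [NeZero n] (M : NModel n) (w : M.World) : NModel n where
  World := { s : List ((Fin n → M.World) × Fin n) // GoodSeq M w s }
  nonempty := ⟨⟨[((fun _ => w), 0)], ⟨⟨[], rfl⟩, List.isChain_singleton _⟩⟩⟩
  R := fun s₀ t =>
    M.R (rmap M w s₀.val) (fun i => rmap M w (t i).val) ∧
    ∀ i, ∃ a, (t i).val = s₀.val ++ [a]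
  V := fun s p => M.V (rmap M w s.val) p

/-- The root ⟨((w,…,w),1)⟩ of the unraveling. -/
def unravelRoot {n : ℕ} [NeZero n] (M : NModel n) (w : M.World) :
    (Unravel M w).World :=
  ⟨[((fun _ => w), 0)], ⟨⟨[], rfl⟩, List.isChain_singleton _⟩⟩

/-- The bounded unraveling M_w|_l : the submodel of M_w of worlds of level at most l. -/
def UnravelB {n : ℕ} [NeZero n] (M : NModel n) (w : M.World) (l : ℕ) : NModel n where
  World := { s : List ((Fin n → M.World) × Fin n) // GoodSeq M w s ∧ s.length ≤ l + 1 }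
  nonempty := ⟨⟨[((fun _ => w), 0)], ⟨⟨⟨[], rfl⟩, List.isChain_singleton _⟩, by simp⟩⟩⟩
  R := fun s₀ t =>
    M.R (rmap M w s₀.val) (fun i => rmap M w (t i).val) ∧
    ∀ i, ∃ a, (t i).val = s₀.val ++ [a]
  V := fun s p => M.V (rmap M w s.val) p

/-- The root of the bounded unraveling. -/
def unravelBRoot {n : ℕ} [NeZero n] (M : NModel n) (w : M.World) (l : ℕ) :
    (UnravelB M w l).World :=
  ⟨[((fun _ => w), 0)], ⟨⟨⟨[], rfl⟩, List.isChain_singleton _⟩, by simp⟩⟩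

/-- R^c x y : y is a member of some successor tuple of x. -/
def Rc {n : ℕ} (M : NModel n) (x y : M.World) : Prop :=
  ∃ v : Fin n → M.World, M.R x v ∧ ∃ i, y = v i

/-- The undirected edge relation induced by R^c. -/
def Edge {n : ℕ} (M : NModel n) (x y : M.World) : Prop := Rc M x y ∨ Rc M y x

/-- There is an undirected R^c-path of length m from x to y. -/
def HasPath {n : ℕ} (M : NModel n) (x y : M.World) (m : ℕ) : Prop :=
  ∃ f : ℕ → M.World, f 0 = x ∧ f m = y ∧ ∀ i < m, Edge M (f i) (f (i+1))

/-- The distance between worlds, in ℕ ∪ {ω} (ω = ⊤ if there is no path). -/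
noncomputable def dist {n : ℕ} (M : NModel n) (x y : M.World) : ℕ∞ :=
  sInf {c : ℕ∞ | ∃ m : ℕ, c = (m : ℕ∞) ∧ HasPath M x y m}

/-- One literal among the letters r₁,…,r_m, i.e. the atoms 2,…,m+1. -/
def IsLit (m : ℕ) (φ : Formula) : Prop :=
  ∃ j, j < m ∧ (φ = Formula.atom (j+2) ∨ φ = Formula.neg (Formula.atom (j+2)))

/-- A conjunction of literals over the letters r₁,…,r_m. -/
inductive IsConjLits (m : ℕ) : Formula → Prop
  | lit {φ} : IsLit m φ → IsConjLits m φ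
  | conj {φ ψ} : IsConjLits m φ → IsConjLits m ψ → IsConjLits m (Formula.and φ ψ)

/-- The Craig Interpolation Property for 𝕂_n. -/
def HasCIP (n : ℕ) : Prop :=
  ∀ φ ψ : Formula, KProof n (φ.imp ψ) →
    ∃ γ : Formula, γ.letters ⊆ φ.letters ∩ ψ.letters ∧
      KProof n (φ.imp γ) ∧ KProof n (γ.imp ψ)


/-!
Modal equivalence is itself a wa^n-bisimulation between image-finite models. For the forth
clause, let `R a v⃗` and let `Y` be the finitely many components of successor tuples of `b`
that are equivalent to no `vᵢ`. Finitely many distinguishing formulas combine into one `θ`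
true at every `vᵢ` and false on `Y`; then `a ⊨ ◇θ`, so `b ⊨ ◇θ`, and the witnessing tuple
avoids `Y`. The back clause is the forth clause with the two models swapped.
-/

section Semantics

variable {n : ℕ} {M : NModel n} {w : M.World} {φ ψ : Formula}

@[simp] lemma sat_bot : ¬ Sat M w Formula.bot := by
  simp [Formula.bot, Sat]

@[simp] lemma sat_or : Sat M w (φ.or ψ) ↔ Sat M w φ ∨ Sat M w ψ := by
  simp only [Formula.or, Sat]
  tauto

lemma sat_dia : Sat M w φ.dia ↔ ∃ v : Fin n → M.World, M.R w v ∧ ∀ i, Sat M (v i) φ := by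
  simp [Formula.dia, Sat]

end Semantics

lemma IsBisim.sat_iff {n : ℕ} {M M' : NModel n} {Z : M.World → M'.World → Prop}
    (hZ : IsBisim M M' Z) (φ : Formula) : ∀ {w w'}, Z w w' → (Sat M w φ ↔ Sat M' w' φ) := by
  obtain ⟨-, hV, hforth, hback⟩ := hZ
  induction φ with
  | atom p => exact fun hw => hV _ _ hw p
  | neg φ ih => exact fun hw => not_congr (ih hw)
  | and φ ψ ihφ ihψ => exact fun hw => and_congr (ihφ hw) (ihψ hw)
  | box φ ih =>
    intro w w' hw
    constructor
    · intro h v' hv'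
      obtain ⟨v, hv, hmatch⟩ := hback w w' v' hw hv'
      obtain ⟨i, hi⟩ := h v hv
      obtain ⟨j, hj⟩ := hmatch i
      exact ⟨j, (ih hj).1 hi⟩
    · intro h v hv
      obtain ⟨v', hv', hmatch⟩ := hforth w w' v hw hv
      obtain ⟨j, hj⟩ := h v' hv'
      obtain ⟨i, hi⟩ := hmatch j
      exact ⟨i, (ih hi).2 hj⟩

lemma ImageFinite.finite_setOf_rc {n : ℕ} {M : NModel n} (hM : ImageFinite M) (x : M.World) :
    {y | Rc M x y}.Finite := by
  refine ((hM x).biUnion fun v _ => Set.finite_range v).subset ?_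
  rintro y ⟨v, hv, i, rfl⟩
  exact Set.mem_biUnion hv ⟨i, rfl⟩

def ModalEquiv {n : ℕ} (M M' : NModel n) (a : M.World) (b : M'.World) : Prop :=
  ∀ φ : Formula, Sat M a φ ↔ Sat M' b φ

namespace ModalEquiv

variable {n : ℕ} {M M' : NModel n}

lemma symm {a : M.World} {b : M'.World} (h : ModalEquiv M M' a b) : ModalEquiv M' M b a :=
  fun φ => (h φ).symm

lemma exists_sat_not_sat {a : M.World} {b : M'.World} (h : ¬ ModalEquiv M M' a b) :
    ∃ φ, Sat M a φ ∧ ¬ Sat M' b φ := by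
  obtain ⟨φ, hφ⟩ := not_forall.1 h
  by_cases ha : Sat M a φ
  · exact ⟨φ, ha, fun hb => hφ (iff_of_true ha hb)⟩
  · exact ⟨φ.neg, ha, fun hb => hφ (iff_of_false ha hb)⟩

lemma exists_sat_forall_not_sat (a : M.World) {Y : Set M'.World} (hY : Y.Finite)
    (h : ∀ b ∈ Y, ¬ ModalEquiv M M' a b) : ∃ φ, Sat M a φ ∧ ∀ b ∈ Y, ¬ Sat M' b φ := by
  induction Y, hY using Set.Finite.induction_on with
  | empty => exact ⟨Formula.bot.neg, sat_bot, by simp⟩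
  | @insert b Y _ _ ih =>
    obtain ⟨φ, haφ, hYφ⟩ := ih fun b' hb' => h b' (Set.mem_insert_of_mem b hb')
    obtain ⟨ψ, haψ, hbψ⟩ := exists_sat_not_sat (h b (Set.mem_insert b Y))
    refine ⟨ψ.and φ, ⟨haψ, haφ⟩, ?_⟩
    rintro b' (rfl | hb') ⟨hψ, hφ⟩
    exacts [hbψ hψ, hYφ b' hb' hφ]

lemma exists_forall_sat_forall_not_sat {X : Set M.World} {Y : Set M'.World} (hX : X.Finite)
    (hY : Y.Finite) (h : ∀ a ∈ X, ∀ b ∈ Y, ¬ ModalEquiv M M' a b) :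
    ∃ θ, (∀ a ∈ X, Sat M a θ) ∧ ∀ b ∈ Y, ¬ Sat M' b θ := by
  induction X, hX using Set.Finite.induction_on with
  | empty => exact ⟨Formula.bot, by simp, fun _ _ => sat_bot⟩
  | @insert a X _ _ ih =>
    obtain ⟨θ, hXθ, hYθ⟩ := ih fun a' ha' => h a' (Set.mem_insert_of_mem a ha')
    obtain ⟨φ, haφ, hYφ⟩ := exists_sat_forall_not_sat a hY (h a (Set.mem_insert a X))
    refine ⟨φ.or θ, ?_, fun b hb => by simp [hYφ b hb, hYθ b hb]⟩
    rintro a' (rfl | ha')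
    exacts [sat_or.2 (Or.inl haφ), sat_or.2 (Or.inr (hXθ a' ha'))]

lemma forth (hM' : ImageFinite M') {a : M.World} {b : M'.World} (hab : ModalEquiv M M' a b)
    {v : Fin n → M.World} (hv : M.R a v) :
    ∃ v' : Fin n → M'.World, M'.R b v' ∧ ∀ j, ∃ i, ModalEquiv M M' (v i) (v' j) := by
  obtain ⟨θ, hvθ, hYθ⟩ := exists_forall_sat_forall_not_sat (Set.finite_range v)
    (Y := {y | Rc M' b y ∧ ∀ i, ¬ ModalEquiv M M' (v i) y})
    ((hM'.finite_setOf_rc b).subset fun _ hy => hy.1) (by rintro _ ⟨i, rfl⟩ y hy; exact hy.2 i)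
  obtain ⟨v', hv', hv'θ⟩ := sat_dia.1 <| (hab θ.dia).1 <| sat_dia.2 ⟨v, hv, fun i => hvθ _ ⟨i, rfl⟩⟩
  refine ⟨v', hv', fun j => ?_⟩
  by_contra! hj
  exact hYθ (v' j) ⟨⟨v', hv', j, rfl⟩, hj⟩ (hv'θ j)

lemma isBisim (hM : ImageFinite M) (hM' : ImageFinite M') {w : M.World} {w' : M'.World}
    (hw : ModalEquiv M M' w w') : IsBisim M M' (ModalEquiv M M') := by
  refine ⟨⟨w, w', hw⟩, fun a b hab p => hab (.atom p), fun a b v hab hv => hab.forth hM' hv,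
    fun a b v' hab hv' => ?_⟩
  obtain ⟨v, hv, hmatch⟩ := hab.symm.forth hM hv'
  exact ⟨v, hv, fun i => (hmatch i).imp fun _ => symm⟩

end ModalEquiv

/-- Hennessy–Milner theorem for WAML^n over image-finite n-models. -/
theorem hennessy_milner (n : ℕ) (M M' : NModel n)
    (hM : ImageFinite M) (hM' : ImageFinite M') (w : M.World) (w' : M'.World) :
    Bisimilar M M' w w' ↔ (∀ φ : Formula, Sat M w φ ↔ Sat M' w' φ) :=
  ⟨fun ⟨_, hZ, hw⟩ φ => hZ.sat_iff φ hw, fun hw => ⟨_, ModalEquiv.isBisim hM hM' hw, hw⟩⟩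

end WAML
end

section
/- Locality lemma: let α(x) be a first-order L¹_n-formula of quantifier rank q that is invariant under wa^n-bisimulation, and let l = 2^q − 1. Then for every n-model M and every world w of M: M ⊨ α[w] if and only if M_w|_l ⊨ α[⟨((w,…,w),1)⟩], where M_w|_l is the submodel of the unraveling M_w consisting of all worlds of level at most l (sequences of length at most l+1). -/
namespace List

variable {α : Type*} [DecidableEq α]

def commonPrefixLength : List α → List α → ℕ
  | a :: s, b :: t => if a = b then commonPrefixLength s t + 1 else 0
  | _, _ => 0

@[simp]
theorem commonPrefixLength_nil_left (t : List α) : commonPrefixLength [] t = 0 := by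
  cases t <;> rfl

theorem commonPrefixLength_comm (s t : List α) :
    commonPrefixLength s t = commonPrefixLength t s := by
  induction s generalizing t with
  | nil => cases t <;> rfl
  | cons a s ih =>
    cases t with
    | nil => rfl
    | cons b t => simp only [commonPrefixLength, ih t, eq_comm]

theorem commonPrefixLength_le_length_left (s t : List α) :
    commonPrefixLength s t ≤ s.length := by
  induction s generalizing t with
  | nil => simp
  | cons a s ih =>
    cases t with
    | nil => simp [commonPrefixLength]
    | cons b t =>
      simp only [commonPrefixLength, length_cons]
      split_ifs
      · exact Nat.succ_le_succ (ih t)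
      · exact Nat.zero_le _

theorem commonPrefixLength_le_length_right (s t : List α) :
    commonPrefixLength s t ≤ t.length :=
  commonPrefixLength_comm s t ▸ commonPrefixLength_le_length_left t s

@[simp]
theorem commonPrefixLength_self_append (s r : List α) :
    commonPrefixLength s (s ++ r) = s.length := by
  induction s with
  | nil => simp
  | cons a s ih => simp [commonPrefixLength, ih]

theorem min_commonPrefixLength_le (s t u : List α) :
    min (commonPrefixLength s t) (commonPrefixLength t u) ≤ commonPrefixLength s u := by
  induction s generalizing t u with
  | nil => simp
  | cons a s ih =>
    rcases t with _ | ⟨b, t⟩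
    · simp [commonPrefixLength]
    rcases u with _ | ⟨c, u⟩
    · simp [commonPrefixLength]
    by_cases hab : a = b
    · subst hab
      by_cases hac : a = c
      · simpa [commonPrefixLength, hac] using ih t u
      · simp [commonPrefixLength, hac]
    · simp [commonPrefixLength, hab]

/-- The distance between `s` and `t` in the tree of all lists ordered by extension. -/
def treeDist (s t : List α) : ℕ :=
  s.length + t.length - 2 * commonPrefixLength s t

@[simp]
theorem treeDist_self (s : List α) : treeDist s s = 0 := by
  have := commonPrefixLength_self_append s []
  simp only [List.append_nil] at this
  simp only [treeDist, this]
  omega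

theorem treeDist_comm (s t : List α) : treeDist s t = treeDist t s := by
  rw [treeDist, treeDist, commonPrefixLength_comm, Nat.add_comm s.length]

@[simp]
theorem treeDist_self_append_singleton (s : List α) (a : α) : treeDist s (s ++ [a]) = 1 := by
  simp only [treeDist, commonPrefixLength_self_append, length_append, length_singleton]
  omega

theorem treeDist_triangle (s t u : List α) : treeDist s u ≤ treeDist s t + treeDist t u := by
  have := min_commonPrefixLength_le s t u
  have := commonPrefixLength_le_length_left s t
  have := commonPrefixLength_le_length_right s t
  have := commonPrefixLength_le_length_left t u
  have := commonPrefixLength_le_length_right t u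
  have := commonPrefixLength_le_length_left s u
  have := commonPrefixLength_le_length_right s u
  simp only [treeDist]
  omega

theorem length_le_add_treeDist (s t : List α) : t.length ≤ s.length + treeDist s t := by
  have := commonPrefixLength_le_length_left s t
  have := commonPrefixLength_le_length_right s t
  simp only [treeDist]
  omega

end List

namespace WAML

section BackAndForth

variable {n : ℕ} {M N : NModel n}

/-- A back-and-forth system indexed by the number of rounds left. -/
structure IsBackAndForth
    (I : ℕ → ∀ {k : ℕ}, (Fin k → M.World) → (Fin k → N.World) → Prop) : Prop where
  pred {r k} {a : Fin k → M.World} {b : Fin k → N.World} :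
    I r a b → ∀ i p, M.V (a i) p ↔ N.V (b i) p
  rel {r k} {a : Fin k → M.World} {b : Fin k → N.World} :
    I r a b → ∀ ts : Fin (n + 1) → Fin k,
      M.R (a (ts 0)) (fun i => a (ts i.succ)) ↔ N.R (b (ts 0)) (fun i => b (ts i.succ))
  eq {r k} {a : Fin k → M.World} {b : Fin k → N.World} :
    I r a b → ∀ i j, a i = a j ↔ b i = b j
  forth {r k} {a : Fin k → M.World} {b : Fin k → N.World} :
    I (r + 1) a b → ∀ x, ∃ y, I r (Fin.snoc a x) (Fin.snoc b y)
  back {r k} {a : Fin k → M.World} {b : Fin k → N.World} :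
    I (r + 1) a b → ∀ y, ∃ x, I r (Fin.snoc a x) (Fin.snoc b y)

theorem IsBackAndForth.realize_iff
    {I : ℕ → ∀ {k : ℕ}, (Fin k → M.World) → (Fin k → N.World) → Prop}
    (hI : IsBackAndForth I) {k : ℕ} (φ : FO n k) :
    ∀ {r} {a : Fin k → M.World} {b : Fin k → N.World}, φ.qr ≤ r → I r a b →
      (FO.Realize M φ a ↔ FO.Realize N φ b) := by
  induction φ with
  | pred p i => exact fun _ h => hI.pred h i p
  | rel ts => exact fun _ h => hI.rel h ts
  | eq i j => exact fun _ h => hI.eq h i j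
  | fal => exact fun _ _ => Iff.rfl
  | not φ ih => exact fun hr h => not_congr (ih hr h)
  | and φ ψ ihφ ihψ =>
    exact fun hr h => and_congr (ihφ (le_of_max_le_left hr) h) (ihψ (le_of_max_le_right hr) h)
  | or φ ψ ihφ ihψ =>
    exact fun hr h => or_congr (ihφ (le_of_max_le_left hr) h) (ihψ (le_of_max_le_right hr) h)
  | imp φ ψ ihφ ihψ =>
    exact fun hr h => imp_congr (ihφ (le_of_max_le_left hr) h) (ihψ (le_of_max_le_right hr) h)
  | all φ ih =>
    intro r a b hr h
    have hr : φ.qr + 1 ≤ r := hr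
    obtain ⟨r, rfl⟩ := Nat.exists_eq_add_of_le' (Nat.one_le_of_lt hr)
    replace hr : φ.qr ≤ r := Nat.le_of_succ_le_succ hr
    refine ⟨fun ha y => ?_, fun hb x => ?_⟩
    · obtain ⟨x, hx⟩ := hI.back h y
      exact (ih hr hx).1 (ha x)
    · obtain ⟨y, hy⟩ := hI.forth h x
      exact (ih hr hy).2 (hb y)

end BackAndForth

section BoundedMorphism

variable {n : ℕ} {M N : NModel n}

structure IsBoundedMorphism (M N : NModel n) (f : M.World → N.World) : Prop where
  valuation : ∀ x p, N.V (f x) p ↔ M.V x p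
  forth : ∀ x v, M.R x v → N.R (f x) (f ∘ v)
  back : ∀ x v', N.R (f x) v' → ∃ v, M.R x v ∧ f ∘ v = v'

theorem IsBoundedMorphism.isBisim {f : M.World → N.World} (hf : IsBoundedMorphism M N f) :
    IsBisim M N (fun x y => f x = y) := by
  obtain ⟨x⟩ := M.nonempty
  refine ⟨⟨x, f x, rfl⟩, ?_, ?_, ?_⟩
  · rintro x _ rfl p
    exact (hf.valuation x p).symm
  · rintro x _ v rfl hv
    exact ⟨f ∘ v, hf.forth x v hv, fun j => ⟨j, rfl⟩⟩
  · rintro x _ v' rfl hv'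
    obtain ⟨v, hv, rfl⟩ := hf.back x v' hv'
    exact ⟨v, hv, fun i => ⟨i, rfl⟩⟩

theorem IsBoundedMorphism.realize_iff {f : M.World → N.World} (hf : IsBoundedMorphism M N f)
    {α : FO n 1} (hα : BisimInvariant n α) (x : M.World) :
    FO.Realize N α (fun _ => f x) ↔ FO.Realize M α (fun _ => x) :=
  (hα M N _ x (f x) hf.isBisim rfl).symm

end BoundedMorphism

section Unraveling

variable {n : ℕ} {M : NModel n} {w : M.World}

@[simp]
theorem rmap_append_singleton (s : List ((Fin n → M.World) × Fin n)) (a) :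
    rmap M w (s ++ [a]) = a.1 a.2 := by
  simp [rmap]

variable [NeZero n]

theorem GoodSeq.append_singleton {s : List ((Fin n → M.World) × Fin n)} (h : GoodSeq M w s)
    {v : Fin n → M.World} (hv : M.R (rmap M w s) v) (i : Fin n) :
    GoodSeq M w (s ++ [(v, i)]) := by
  obtain ⟨⟨rest, rfl⟩, hchain⟩ := h
  refine ⟨⟨rest ++ [(v, i)], rfl⟩, hchain.append (List.isChain_singleton _) ?_⟩
  rintro x hx _ ⟨⟩
  rw [Option.mem_def] at hx
  simp only [rmap, hx] at hv
  exact hv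

variable (M w) in
theorem isBoundedMorphism_rmap :
    IsBoundedMorphism (Unravel M w) M (fun s => rmap M w s.val) where
  valuation _ _ := Iff.rfl
  forth _ _ h := h.1
  back s v hv := by
    have hrmap : (fun i => rmap M w (s.val ++ [(v, i)])) = v :=
      funext fun _ => rmap_append_singleton _ _
    exact ⟨fun i => ⟨s.val ++ [(v, i)], s.2.append_singleton hv i⟩,
      ⟨by rwa [← hrmap] at hv, fun i => ⟨(v, i), rfl⟩⟩, hrmap⟩

end Unraveling

variable {n : ℕ} [NeZero n]

/-- Copy `(k, true)` is the `k`-th copy of `M_w` and copy `(k, false)` the `k`-th copy of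
`M_w|_l`. -/
@[ext]
structure CopyWorld (M : NModel n) (w : M.World) (l : ℕ) where
  copy : ℕ × Bool
  seq : List ((Fin n → M.World) × Fin n)
  good : GoodSeq M w seq
  bounded : copy.2 = false → seq.length ≤ l + 1

def CopyWorld.inCopy {M : NModel n} {w : M.World} {l : ℕ} (z : CopyWorld M w l) (c : ℕ × Bool)
    (h : c.2 = false → z.seq.length ≤ l + 1) : CopyWorld M w l :=
  ⟨c, z.seq, z.good, h⟩

def Copies (M : NModel n) (w : M.World) (l : ℕ) : NModel n where
  World := CopyWorld M w l
  nonempty := ⟨⟨(0, true), _, (unravelRoot M w).2, nofun⟩⟩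
  R z t := (∀ i, (t i).copy = z.copy) ∧
    M.R (rmap M w z.seq) (fun i => rmap M w (t i).seq) ∧ ∀ i, ∃ a, (t i).seq = z.seq ++ [a]
  V z p := M.V (rmap M w z.seq) p

namespace Copies

open Classical

variable {M : NModel n} {w : M.World} {l : ℕ}

def ofUnravel (k : ℕ) (s : (Unravel M w).World) : (Copies M w l).World :=
  ⟨(k, true), s.val, s.2, nofun⟩

def ofUnravelB (k : ℕ) (s : (UnravelB M w l).World) : (Copies M w l).World :=
  ⟨(k, false), s.val, s.2.1, fun _ => s.2.2⟩

theorem isBoundedMorphism_ofUnravel (k : ℕ) :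
    IsBoundedMorphism (Unravel M w) (Copies M w l) (ofUnravel k) where
  valuation _ _ := Iff.rfl
  forth _ _ h := ⟨fun _ => rfl, h⟩
  back _ t h :=
    ⟨fun i => ⟨(t i).seq, (t i).good⟩, h.2, funext fun i => CopyWorld.ext (h.1 i).symm rfl⟩

theorem isBoundedMorphism_ofUnravelB (k : ℕ) :
    IsBoundedMorphism (UnravelB M w l) (Copies M w l) (ofUnravelB k) where
  valuation _ _ := Iff.rfl
  forth _ _ h := ⟨fun _ => rfl, h⟩
  back _ t h :=
    ⟨fun i => ⟨(t i).seq, (t i).good, (t i).bounded (by rw [h.1 i]; rfl)⟩, h.2,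
      funext fun i => CopyWorld.ext (h.1 i).symm rfl⟩

/-- Duplicator's invariant with `r` rounds left. -/
structure LocallyAlike (l r : ℕ) {k : ℕ} (a b : Fin k → CopyWorld M w l) : Prop where
  seq_eq : ∀ i, (a i).seq = (b i).seq
  copy_eq_iff : ∀ i j, List.treeDist (a i).seq (a j).seq ≤ 2 ^ r →
    ((a i).copy = (a j).copy ↔ (b i).copy = (b j).copy)
  flag : ∀ i, (a i).copy.2 = (b i).copy.2 ∨ (a i).seq.length + 2 ^ r ≤ l + 2

namespace LocallyAlike

variable {r k : ℕ} {a b : Fin k → CopyWorld M w l}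

theorem symm (h : LocallyAlike l r a b) : LocallyAlike l r b a where
  seq_eq i := (h.seq_eq i).symm
  copy_eq_iff i j hd := (h.copy_eq_iff i j (by rwa [h.seq_eq, h.seq_eq])).symm
  flag i := (h.flag i).imp Eq.symm (h.seq_eq i ▸ id)

theorem of_succ (h : LocallyAlike l (r + 1) a b) : LocallyAlike l r a b where
  seq_eq := h.seq_eq
  copy_eq_iff i j hd := h.copy_eq_iff i j (hd.trans (Nat.pow_le_pow_right two_pos r.le_succ))
  flag i := (h.flag i).imp id fun hi => by rw [pow_succ] at hi; omega

theorem snoc (h : LocallyAlike l r a b) {x y : CopyWorld M w l} (hseq : x.seq = y.seq)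
    (hcopy : ∀ j, List.treeDist x.seq (a j).seq ≤ 2 ^ r →
      (x.copy = (a j).copy ↔ y.copy = (b j).copy))
    (hflag : x.copy.2 = y.copy.2 ∨ x.seq.length + 2 ^ r ≤ l + 2) :
    LocallyAlike l r (Fin.snoc a x) (Fin.snoc b y) where
  seq_eq := by
    simp only [Fin.forall_fin_succ', Fin.snoc_castSucc, Fin.snoc_last]
    exact ⟨h.seq_eq, hseq⟩
  copy_eq_iff := by
    simp only [Fin.forall_fin_succ', Fin.snoc_castSucc, Fin.snoc_last]
    refine ⟨fun i => ⟨h.copy_eq_iff i, fun hd => ?_⟩, hcopy, fun _ => trivial⟩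
    rw [List.treeDist_comm] at hd
    simpa only [eq_comm] using hcopy i hd
  flag := by
    simp only [Fin.forall_fin_succ', Fin.snoc_castSucc, Fin.snoc_last]
    exact ⟨h.flag, hflag⟩

theorem rel (h : LocallyAlike l r a b) (i : Fin k) (js : Fin n → Fin k)
    (hR : (Copies M w l).R (a i) (fun m => a (js m))) :
    (Copies M w l).R (b i) (fun m => b (js m)) := by
  obtain ⟨hcopy, hM, hext⟩ := hR
  refine ⟨fun m => ?_, by simpa only [h.seq_eq] using hM, by simpa only [h.seq_eq] using hext⟩
  have hd : List.treeDist (a i).seq (a (js m)).seq ≤ 2 ^ r := by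
    obtain ⟨_, he⟩ := hext m
    rw [he, List.treeDist_self_append_singleton]
    exact Nat.one_le_two_pow
  exact ((h.copy_eq_iff i (js m) hd).1 (hcopy m).symm).symm

theorem eq (h : LocallyAlike l r a b) {i j : Fin k} (hij : a i = a j) : b i = b j :=
  CopyWorld.ext ((h.copy_eq_iff i j (by simp [hij])).1 (by rw [hij]))
    (by rw [← h.seq_eq, ← h.seq_eq, hij])

theorem forth (h : LocallyAlike l (r + 1) a b) (x : CopyWorld M w l) :
    ∃ y, LocallyAlike l r (Fin.snoc a x) (Fin.snoc b y) := by
  by_cases hnear : ∃ i, (a i).copy = x.copy ∧ List.treeDist x.seq (a i).seq ≤ 2 ^ r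
  · obtain ⟨i, hcopy, hdist⟩ := hnear
    have hlen := List.length_le_add_treeDist (a i).seq x.seq
    rw [List.treeDist_comm] at hlen
    have hflag : x.copy.2 = (b i).copy.2 ∨ x.seq.length + 2 ^ r ≤ l + 2 := by
      refine (h.flag i).imp (hcopy ▸ id) fun hi => ?_
      rw [pow_succ] at hi
      omega
    refine ⟨x.inCopy (b i).copy fun hb => ?_, h.of_succ.snoc rfl (fun j hj => ?_) hflag⟩
    · rcases hflag with hf | hf
      · exact x.bounded (hf.trans hb)
      · have := @Nat.one_le_two_pow r
        omega
    · have hij : List.treeDist (a i).seq (a j).seq ≤ 2 ^ (r + 1) :=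
        calc List.treeDist (a i).seq (a j).seq
            ≤ List.treeDist (a i).seq x.seq + List.treeDist x.seq (a j).seq :=
              List.treeDist_triangle _ _ _
          _ ≤ 2 ^ r + 2 ^ r := add_le_add (List.treeDist_comm x.seq _ ▸ hdist) hj
          _ = 2 ^ (r + 1) := by ring
      have hiff := h.copy_eq_iff i j hij
      rw [hcopy] at hiff
      exact hiff
  · push Not at hnear
    obtain ⟨K, hK⟩ := (Set.finite_range fun j => (b j).copy.1).bddAbove
    refine ⟨x.inCopy (K + 1, x.copy.2) x.bounded, h.of_succ.snoc rfl (fun j hj => ?_) (.inl rfl)⟩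
    refine iff_of_false (fun hx => (hnear j hx.symm).not_ge hj) fun hy => ?_
    have : (b j).copy.1 ≤ K := hK ⟨j, rfl⟩
    have : K + 1 = (b j).copy.1 := congrArg Prod.fst hy
    omega

end LocallyAlike

theorem isBackAndForth_locallyAlike :
    IsBackAndForth (M := Copies M w l) (N := Copies M w l) (LocallyAlike l) where
  pred h i p := by
    change M.V (rmap M w _) p ↔ M.V (rmap M w _) p
    rw [h.seq_eq i]
  rel h ts := ⟨h.rel _ _, h.symm.rel _ _⟩
  eq h _ _ := ⟨h.eq, h.symm.eq⟩
  forth h := h.forth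
  back h y := (h.symm.forth y).imp fun _ hx => hx.symm

theorem locallyAlike_root {r : ℕ} (hl : 2 ^ r ≤ l + 1) :
    LocallyAlike l r (fun _ : Fin 1 => ofUnravel 0 (unravelRoot M w))
      (fun _ => ofUnravelB 0 (unravelBRoot M w l)) where
  seq_eq _ := rfl
  copy_eq_iff _ _ _ := iff_of_true rfl rfl
  flag _ := .inr (by change 1 + 2 ^ r ≤ l + 2; omega)

theorem realize_unravel_iff_realize_unravelB {α : FO n 1} (hα : BisimInvariant n α)
    (hl : 2 ^ α.qr ≤ l + 1) :
    FO.Realize (Unravel M w) α (fun _ => unravelRoot M w) ↔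
      FO.Realize (UnravelB M w l) α (fun _ => unravelBRoot M w l) := by
  rw [← (isBoundedMorphism_ofUnravel 0).realize_iff hα,
    ← (isBoundedMorphism_ofUnravelB 0).realize_iff hα]
  exact isBackAndForth_locallyAlike.realize_iff α le_rfl (locallyAlike_root hl)

end Copies

/-- locality lemma. If α(x) has quantifier rank q and is invariant under
wa^n-bisimulation, then with l = 2^q − 1, M ⊨ α[w] iff M_w|_l ⊨ α[root]. -/
theorem locality (n : ℕ) [NeZero n] (α : FO n 1) (hα : BisimInvariant n α)
    (M : NModel n) (w : M.World) :
    FO.Realize M α (fun _ => w) ↔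
    FO.Realize (UnravelB M w (2 ^ α.qr - 1)) α
      (fun _ => unravelBRoot M w (2 ^ α.qr - 1)) :=
  ((isBoundedMorphism_rmap M w).realize_iff hα (unravelRoot M w)).trans
    (Copies.realize_unravel_iff_realize_unravelB hα (by have := @Nat.one_le_two_pow α.qr; omega))

end WAML
end
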